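/- arXiv:2510.03563 — 3 statements merged into one kernel-verified Lean document; each statement's English description precedes it below -/
import Mathlib

section
/- For every natural number k, every vector field v : ℝ² → ℝ² whose two components are real polynomial functions of total degree at most k can be written as v = ∇p + x⊥·q, where p : ℝ² → ℝ is a polynomial function of total degree at most k+1, q : ℝ² → ℝ is a polynomial function of total degree at most k−1 (with q = 0 when k = 0), and x⊥·q denotes the vector field (x,y) ↦ (y·q(x,y), −x·q(x,y)). -/
/-- `f : ℝ² → ℝ` is a real polynomial function of total degree at most `k`. -/
def IsPolyFunDeg (f : ℝ × ℝ → ℝ) (k : ℕ) : Prop :=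
  ∃ P : MvPolynomial (Fin 2) ℝ, P.totalDegree ≤ k ∧
    ∀ z : ℝ × ℝ, f z = MvPolynomial.eval ![z.1, z.2] P

/-- Partial derivative in the first variable. -/
noncomputable def pdx (f : ℝ × ℝ → ℝ) (z : ℝ × ℝ) : ℝ := fderiv ℝ f z (1, 0)

/-- Partial derivative in the second variable. -/
noncomputable def pdy (f : ℝ × ℝ → ℝ) (z : ℝ × ℝ) : ℝ := fderiv ℝ f z (0, 1)

/-!
Let `E = x ∂ₓ + y ∂ᵧ` be the Euler operator, which multiplies every monomial of degree `n`
by `n`. Then `1 + E` is invertible on polynomials, its inverse `J = oneAddEulerInv` scaling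
degree-`n` monomials by `1 / (n + 1)` and so not raising the degree. For a field `(A, B)` put
`a = J A`, `b = J B`, `p = x a + y b` and `q = ∂ᵧ a - ∂ₓ b`: the mixed terms cancel and
`∇p + x⊥ q = ((1 + E) a, (1 + E) b) = (A, B)`, with `deg p ≤ k + 1` and `deg q ≤ k - 1`.
-/

open MvPolynomial

namespace MvPolynomial

variable {σ R K 𝕜 : Type*}

section CommSemiring

variable [CommSemiring R]

theorem sum_X_mul_pderiv_monomial [Fintype σ] (d : σ →₀ ℕ) (c : R) :
    ∑ i, X i * pderiv i (monomial d c) = d.degree • monomial d c := by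
  simp only [X_mul_pderiv_monomial, ← Finset.sum_smul, Finsupp.degree_eq_sum]

theorem totalDegree_pderiv_le (P : MvPolynomial σ R) (i : σ) :
    (pderiv i P).totalDegree ≤ P.totalDegree - 1 := by
  classical
  refine Finset.sup_le fun m hm => ?_
  have hm' : m + Finsupp.single i 1 ∈ P.support := by
    rw [mem_support_iff, coeff_pderiv] at hm
    exact mem_support_iff.mpr (left_ne_zero_of_mul hm)
  have hdeg : (m + Finsupp.single i 1).degree ≤ P.totalDegree := le_totalDegree hm'
  rw [map_add, Finsupp.degree_single] at hdeg
  change m.degree ≤ _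
  omega

theorem pderiv_eq_zero_of_totalDegree_eq_zero {P : MvPolynomial σ R}
    (hP : P.totalDegree = 0) (i : σ) : pderiv i P = 0 := by
  rw [totalDegree_eq_zero_iff_eq_C.mp hP, pderiv_C]

end CommSemiring

section Field

variable [Field K]

noncomputable def oneAddEulerInv (P : MvPolynomial σ K) : MvPolynomial σ K :=
  ∑ d ∈ P.support, monomial d (coeff d P / (d.degree + 1))

theorem totalDegree_oneAddEulerInv_le (P : MvPolynomial σ K) :
    (oneAddEulerInv P).totalDegree ≤ P.totalDegree :=
  (totalDegree_finsetSum _ _).trans <| Finset.sup_le fun _ hd =>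
    (totalDegree_monomial_le _ _).trans (le_totalDegree hd)

theorem oneAddEulerInv_add_sum_X_mul_pderiv [CharZero K] [Fintype σ] (P : MvPolynomial σ K) :
    oneAddEulerInv P + ∑ i, X i * pderiv i (oneAddEulerInv P) = P := by
  conv_rhs => rw [P.as_sum]
  simp only [oneAddEulerInv, map_sum, Finset.mul_sum]
  rw [Finset.sum_comm, ← Finset.sum_add_distrib]
  refine Finset.sum_congr rfl fun d _ => ?_
  rw [sum_X_mul_pderiv_monomial, ← Nat.cast_smul_eq_nsmul K, smul_monomial, ← map_add]
  have hn : (d.degree : K) + 1 ≠ 0 := Nat.cast_add_one_ne_zero _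
  congr 1
  rw [smul_eq_mul]
  field_simp
  ring

theorem exists_eq_pderiv_add_X_perp_mul [CharZero K] {k : ℕ} {A B : MvPolynomial (Fin 2) K}
    (hA : A.totalDegree ≤ k) (hB : B.totalDegree ≤ k) :
    ∃ p q : MvPolynomial (Fin 2) K, p.totalDegree ≤ k + 1 ∧ q.totalDegree ≤ k - 1 ∧
      (k = 0 → q = 0) ∧ pderiv 0 p + X 1 * q = A ∧ pderiv 1 p - X 0 * q = B := by
  set a := oneAddEulerInv A
  set b := oneAddEulerInv B
  have ha : a.totalDegree ≤ k := (totalDegree_oneAddEulerInv_le A).trans hA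
  have hb : b.totalDegree ≤ k := (totalDegree_oneAddEulerInv_le B).trans hB
  have hEulerA := oneAddEulerInv_add_sum_X_mul_pderiv A
  have hEulerB := oneAddEulerInv_add_sum_X_mul_pderiv B
  rw [Fin.sum_univ_two] at hEulerA hEulerB
  refine ⟨X 0 * a + X 1 * b, pderiv 1 a - pderiv 0 b, ?_, ?_, ?_, ?_, ?_⟩
  · refine (totalDegree_add _ _).trans (max_le ?_ ?_) <;>
      refine (totalDegree_mul _ _).trans ?_ <;> rw [totalDegree_X] <;> omega
  · refine (totalDegree_sub _ _).trans (max_le ?_ ?_) <;>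
      refine (totalDegree_pderiv_le _ _).trans ?_ <;> omega
  · rintro rfl
    rw [pderiv_eq_zero_of_totalDegree_eq_zero (Nat.le_zero.mp ha),
      pderiv_eq_zero_of_totalDegree_eq_zero (Nat.le_zero.mp hb), sub_zero]
  · simp only [map_add, pderiv_mul, pderiv_X_self, pderiv_X_of_ne one_ne_zero]
    linear_combination hEulerA
  · simp only [map_add, pderiv_mul, pderiv_X_self, pderiv_X_of_ne zero_ne_one]
    linear_combination hEulerB

end Field

theorem hasFDerivAt_eval [NontriviallyNormedField 𝕜] [Fintype σ] (P : MvPolynomial σ 𝕜)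
    (x : σ → 𝕜) :
    HasFDerivAt (fun y => eval y P)
      (∑ i, eval x (pderiv i P) • ContinuousLinearMap.proj (R := 𝕜) (φ := fun _ => 𝕜) i)
      x := by
  induction P using MvPolynomial.induction_on with
  | C a =>
    simp only [eval_C]
    exact (hasFDerivAt_const a x).congr_fderiv (by ext; simp)
  | add p q hp hq =>
    simp only [map_add]
    exact (hp.add hq).congr_fderiv (by ext; simp [add_mul, Finset.sum_add_distrib])
  | mul_X p i hp =>
    simp only [map_mul, eval_X]
    classical
    refine (hp.mul (hasFDerivAt_apply i x)).congr_fderiv ?_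
    ext v
    simp [pderiv_X, Pi.single_apply, apply_ite (eval x), Finset.mul_sum, add_mul, ite_mul,
      Finset.sum_add_distrib, mul_assoc]

theorem fderiv_eval_fin_two (P : MvPolynomial (Fin 2) ℝ) (z w : ℝ × ℝ) :
    fderiv ℝ (fun y : ℝ × ℝ => eval ![y.1, y.2] P) z w =
      eval ![z.1, z.2] (pderiv 0 P) * w.1 + eval ![z.1, z.2] (pderiv 1 P) * w.2 := by
  let L : ℝ × ℝ →L[ℝ] Fin 2 → ℝ := .pi ![.fst ℝ ℝ ℝ, .snd ℝ ℝ ℝ]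
  have hL : ∀ y, L y = ![y.1, y.2] := fun y => by ext i; fin_cases i <;> rfl
  have h := (hasFDerivAt_eval P (L z)).comp z L.hasFDerivAt
  simp only [Function.comp_def, hL] at h
  simp [h.fderiv, hL, Fin.sum_univ_two]

end MvPolynomial

/-- Every vector field on `ℝ²` with polynomial components of total degree at most `k`
decomposes as `∇p + x⊥·q` with `deg p ≤ k+1` and `deg q ≤ k−1` (`q = 0` when `k = 0`),
where `(x⊥·q)(x,y) = (y·q(x,y), −x·q(x,y))`. -/
theorem vector_poly_decomposition (k : ℕ) (v : ℝ × ℝ → ℝ × ℝ)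
    (hv1 : IsPolyFunDeg (fun z => (v z).1) k)
    (hv2 : IsPolyFunDeg (fun z => (v z).2) k) :
    ∃ p q : ℝ × ℝ → ℝ,
      IsPolyFunDeg p (k + 1) ∧ IsPolyFunDeg q (k - 1) ∧
      (k = 0 → ∀ z, q z = 0) ∧
      ∀ z : ℝ × ℝ, v z = (pdx p z + z.2 * q z, pdy p z - z.1 * q z) := by
  obtain ⟨A, hA, hvA⟩ := hv1
  obtain ⟨B, hB, hvB⟩ := hv2
  obtain ⟨p, q, hp, hq, hq0, hpqA, hpqB⟩ := exists_eq_pderiv_add_X_perp_mul hA hB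
  refine ⟨fun z => eval ![z.1, z.2] p, fun z => eval ![z.1, z.2] q, ⟨p, hp, fun _ => rfl⟩,
    ⟨q, hq, fun _ => rfl⟩, fun hk z => by simp [hq0 hk], fun z => ?_⟩
  ext
  · simp [pdx, fderiv_eval_fin_two, hvA, ← hpqA]
  · simp [pdy, fderiv_eval_fin_two, hvB, ← hpqB]
end

section
/- Let p₁, p₂ : ℝ² → ℝ and q₁, q₂ : ℝ² → ℝ be polynomial functions such that ∇p₁ + x⊥·q₁ = ∇p₂ + x⊥·q₂ as functions on ℝ². Then q₁ = q₂ and ∇p₁ = ∇p₂ (so p₁ − p₂ is constant). In particular the sum ∇ℙ_{k+1} + x⊥ℙ_{k−1} is direct: if ∇p = x⊥·q for polynomials p, q, then q = 0 and ∇p = 0. -/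
/-- `f : ℝ² → ℝ` is a real polynomial function. -/
def IsPolyFun (f : ℝ × ℝ → ℝ) : Prop :=
  ∃ P : MvPolynomial (Fin 2) ℝ, ∀ z : ℝ × ℝ, f z = MvPolynomial.eval ![z.1, z.2] P

/-! If `∇p = x⊥ q`, the radial derivative `x p_x + y p_y = x y q - y x q` vanishes, so `p` is
constant; then `x⊥ q = ∇p = 0` kills `q` off the origin, hence everywhere by continuity.
The general statement is this applied to `p₁ - p₂` and `q₂ - q₁`. -/

theorem IsPolyFun.analyticAt {f : ℝ × ℝ → ℝ} (hf : IsPolyFun f) (z : ℝ × ℝ) :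
    AnalyticAt ℝ f z := by
  obtain ⟨P, hP⟩ := hf
  simp_rw [funext hP, ← MvPolynomial.coe_aeval_eq_eval]
  refine AnalyticAt.aeval_mvPolynomial (fun i => ?_) P
  fin_cases i
  exacts [analyticAt_fst, analyticAt_snd]

theorem IsPolyFun.differentiable {f : ℝ × ℝ → ℝ} (hf : IsPolyFun f) : Differentiable ℝ f :=
  fun z => (hf.analyticAt z).differentiableAt

theorem IsPolyFun.continuous {f : ℝ × ℝ → ℝ} (hf : IsPolyFun f) : Continuous f :=
  hf.differentiable.continuous

theorem IsPolyFun.sub {f g : ℝ × ℝ → ℝ} (hf : IsPolyFun f) (hg : IsPolyFun g) :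
    IsPolyFun (f - g) := by
  obtain ⟨P, hP⟩ := hf
  obtain ⟨Q, hQ⟩ := hg
  exact ⟨P - Q, fun z => by simp [hP, hQ]⟩

theorem fderiv_apply_eq_pdx_pdy (f : ℝ × ℝ → ℝ) (z v : ℝ × ℝ) :
    fderiv ℝ f z v = v.1 * pdx f z + v.2 * pdy f z := by
  have hv : v = v.1 • ((1 : ℝ), (0 : ℝ)) + v.2 • ((0 : ℝ), (1 : ℝ)) := by ext <;> simp
  rw [hv, map_add, map_smul, map_smul]
  simp [pdx, pdy]

theorem pdx_sub {f g : ℝ × ℝ → ℝ} {z : ℝ × ℝ} (hf : DifferentiableAt ℝ f z)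
    (hg : DifferentiableAt ℝ g z) : pdx (f - g) z = pdx f z - pdx g z := by
  simp [pdx, fderiv_sub hf hg]

theorem pdy_sub {f g : ℝ × ℝ → ℝ} {z : ℝ × ℝ} (hf : DifferentiableAt ℝ f z)
    (hg : DifferentiableAt ℝ g z) : pdy (f - g) z = pdy f z - pdy g z := by
  simp [pdy, fderiv_sub hf hg]

/-- Along the ray `t ↦ f (t • z)` the derivative `t⁻¹ * fderiv ℝ f (t • z) (t • z)` is known to
vanish only for `t ≠ 0`, hence the mean value theorem on `(0, 1)`. -/
theorem apply_eq_apply_zero_of_fderiv_apply_self_eq_zero {E : Type*} [NormedAddCommGroup E]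
    [NormedSpace ℝ E] {f : E → ℝ} (hf : Differentiable ℝ f)
    (hrad : ∀ w, fderiv ℝ f w w = 0) (z : E) : f z = f 0 := by
  set g : ℝ → ℝ := fun t => f (t • z)
  have hg : ∀ t, HasDerivAt g (fderiv ℝ f (t • z) z) t := fun t =>
    (hf (t • z)).hasFDerivAt.comp_hasDerivAt t (by simpa using (hasDerivAt_id t).smul_const z)
  obtain ⟨t, ht, hslope⟩ := exists_hasDerivAt_eq_slope g _ zero_lt_one
    (fun t _ => (hg t).continuousAt.continuousWithinAt) (fun t _ => hg t)
  have hderiv : fderiv ℝ f (t • z) z = 0 := by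
    have : fderiv ℝ f (t • z) (t • z) = 0 := hrad _
    rw [map_smul, smul_eq_mul] at this
    exact (mul_eq_zero.mp this).resolve_left ht.1.ne'
  simpa [g, hderiv, sub_eq_zero, eq_comm] using hslope

theorem eq_zero_of_fst_mul_eq_zero_of_snd_mul_eq_zero {q : ℝ × ℝ → ℝ} (hq : Continuous q)
    (h₁ : ∀ z : ℝ × ℝ, z.1 * q z = 0) (h₂ : ∀ z : ℝ × ℝ, z.2 * q z = 0) (z : ℝ × ℝ) :
    q z = 0 := by
  suffices q = 0 from congrFun this z
  refine Continuous.ext_on (dense_compl_singleton 0) hq continuous_const fun w hw => ?_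
  obtain h | h : w.1 ≠ 0 ∨ w.2 ≠ 0 := by
    by_contra! h
    exact hw (Prod.ext h.1 h.2)
  exacts [(mul_eq_zero.mp (h₁ w)).resolve_left h, (mul_eq_zero.mp (h₂ w)).resolve_left h]

theorem eq_zero_of_pdx_pdy_eq_perp_mul {p q : ℝ × ℝ → ℝ} (hp : Differentiable ℝ p)
    (hq : Continuous q) (hx : ∀ z : ℝ × ℝ, pdx p z = z.2 * q z)
    (hy : ∀ z : ℝ × ℝ, pdy p z = -(z.1 * q z)) :
    (∀ z, q z = 0) ∧ ∀ z, p z = p 0 := by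
  have hconst : ∀ z, p z = p 0 :=
    apply_eq_apply_zero_of_fderiv_apply_self_eq_zero hp fun w => by
      rw [fderiv_apply_eq_pdx_pdy, hx, hy]; ring
  have hgrad : ∀ z, fderiv ℝ p z = 0 := fun z => by
    rw [show p = fun _ => p 0 from funext hconst]; exact fderiv_const_apply _
  have hx0 : ∀ z : ℝ × ℝ, z.2 * q z = 0 := fun z => by rw [← hx, pdx, hgrad]; rfl
  have hy0 : ∀ z : ℝ × ℝ, z.1 * q z = 0 := fun z => by
    rw [← neg_eq_zero, ← hy, pdy, hgrad]; rfl
  exact ⟨eq_zero_of_fst_mul_eq_zero_of_snd_mul_eq_zero hq hy0 hx0, hconst⟩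

/-- If `∇p₁ + x⊥·q₁ = ∇p₂ + x⊥·q₂` for polynomial functions, then `q₁ = q₂` and
`∇p₁ = ∇p₂` (so `p₁ − p₂` is constant).  In particular the sum `∇ℙ_{k+1} + x⊥ℙ_{k−1}`
is direct: if `∇p = x⊥·q` then `q = 0` and `∇p = 0`. -/
theorem gradient_perp_sum_is_direct (p₁ p₂ q₁ q₂ : ℝ × ℝ → ℝ)
    (hp₁ : IsPolyFun p₁) (hp₂ : IsPolyFun p₂)
    (hq₁ : IsPolyFun q₁) (hq₂ : IsPolyFun q₂)
    (h : ∀ z : ℝ × ℝ,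
      (pdx p₁ z + z.2 * q₁ z, pdy p₁ z - z.1 * q₁ z)
        = (pdx p₂ z + z.2 * q₂ z, pdy p₂ z - z.1 * q₂ z)) :
    ((∀ z, q₁ z = q₂ z) ∧
     (∀ z, pdx p₁ z = pdx p₂ z ∧ pdy p₁ z = pdy p₂ z) ∧
     (∃ c : ℝ, ∀ z, p₁ z - p₂ z = c)) ∧
    (∀ p q : ℝ × ℝ → ℝ, IsPolyFun p → IsPolyFun q →
      (∀ z : ℝ × ℝ, (pdx p z, pdy p z) = (z.2 * q z, -(z.1 * q z))) →
      (∀ z, q z = 0) ∧ (∀ z, pdx p z = 0 ∧ pdy p z = 0)) := by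
  have hx (z : ℝ × ℝ) := congrArg Prod.fst (h z)
  have hy (z : ℝ × ℝ) := congrArg Prod.snd (h z)
  dsimp only at hx hy
  obtain ⟨hq, hconst⟩ := eq_zero_of_pdx_pdy_eq_perp_mul (p := p₁ - p₂) (q := q₂ - q₁)
    (hp₁.sub hp₂).differentiable (hq₂.sub hq₁).continuous
    (fun z => by
      rw [pdx_sub (hp₁.differentiable z) (hp₂.differentiable z), Pi.sub_apply]
      linarith [hx z])
    (fun z => by
      rw [pdy_sub (hp₁.differentiable z) (hp₂.differentiable z), Pi.sub_apply]
      linarith [hy z])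
  have hq_eq (z : ℝ × ℝ) : q₁ z = q₂ z := (sub_eq_zero.mp (hq z)).symm
  refine ⟨⟨hq_eq, fun z => ⟨?_, ?_⟩, ⟨p₁ 0 - p₂ 0, hconst⟩⟩, ?_⟩
  · simpa [hq_eq z] using hx z
  · simpa [hq_eq z] using hy z
  · intro p q hp hq hgrad
    obtain ⟨hq0, -⟩ := eq_zero_of_pdx_pdy_eq_perp_mul hp.differentiable hq.continuous
      (fun z => congrArg Prod.fst (hgrad z)) (fun z => congrArg Prod.snd (hgrad z))
    refine ⟨hq0, fun z => ?_⟩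
    simpa [hq0 z] using hgrad z
end

section
/- Fix a center c = (c₁,c₂) ∈ ℝ² and a scale h > 0, and for a multi-index α = (α₁,α₂) ∈ ℕ² define the scaled monomial m_α(x,y) := ((x−c₁)/h)^{α₁}·((y−c₂)/h)^{α₂} and the scaled perpendicular field x⊥(x,y) := ((y−c₂)/h, −(x−c₁)/h). Then for every β = (β_x, β_y) ∈ ℕ², writing |β| := β_x + β_y, the following identity of vector fields holds on ℝ²: (m_β, 0) = (h/(|β|+1))·∇m_{(β_x+1, β_y)} + (β_y/(|β|+1))·x⊥·m_{(β_x, β_y−1)}, where the second term is interpreted as zero when β_y = 0. -/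
/-- Scaled monomial `m_α(x,y) = ((x−c₁)/h)^{α₁}·((y−c₂)/h)^{α₂}` with center `c`, scale `h`. -/
noncomputable def smon (c : ℝ × ℝ) (h : ℝ) (α : ℕ × ℕ) (z : ℝ × ℝ) : ℝ :=
  ((z.1 - c.1) / h) ^ α.1 * ((z.2 - c.2) / h) ^ α.2

/-! With `u = (x - c₁)/h` and `v = (y - c₂)/h`, both partial derivatives of `m_{(βx+1,βy)}` are
again scaled monomials: `h ∂ₓ m_{(βx+1,βy)} = (βx + 1) m_β` and `h ∂_y m_{(βx+1,βy)} = βy u m_{(βx,βy-1)}`.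
Hence the second components cancel against `-βy u m_{(βx,βy-1)}`, while in the first component
`βy v m_{(βx,βy-1)} = βy m_β`, so the coefficients add up to `(βx + 1 + βy)/(|β| + 1) = 1`. -/

theorem hasFDerivAt_mul_fst_snd {f g : ℝ → ℝ} {f' g' : ℝ} {z : ℝ × ℝ}
    (hf : HasDerivAt f f' z.1) (hg : HasDerivAt g g' z.2) :
    HasFDerivAt (fun p : ℝ × ℝ => f p.1 * g p.2)
      ((f' * g z.2) • ContinuousLinearMap.fst ℝ ℝ ℝ
        + (f z.1 * g') • ContinuousLinearMap.snd ℝ ℝ ℝ) z := by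
  have hf₂ := hf.comp_hasFDerivAt z (hasFDerivAt_fst (𝕜 := ℝ) (p := z))
  have hg₂ := hg.comp_hasFDerivAt z (hasFDerivAt_snd (𝕜 := ℝ) (p := z))
  refine (hf₂.mul hg₂).congr_fderiv ?_
  ext <;> simp [mul_comm]

theorem pdx_mul_fst_snd {f g : ℝ → ℝ} {f' g' : ℝ} {z : ℝ × ℝ}
    (hf : HasDerivAt f f' z.1) (hg : HasDerivAt g g' z.2) :
    pdx (fun p => f p.1 * g p.2) z = f' * g z.2 := by
  simp [pdx, (hasFDerivAt_mul_fst_snd hf hg).fderiv]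

theorem pdy_mul_fst_snd {f g : ℝ → ℝ} {f' g' : ℝ} {z : ℝ × ℝ}
    (hf : HasDerivAt f f' z.1) (hg : HasDerivAt g g' z.2) :
    pdy (fun p => f p.1 * g p.2) z = f z.1 * g' := by
  simp [pdy, (hasFDerivAt_mul_fst_snd hf hg).fderiv]

theorem hasDerivAt_div_pow (a h : ℝ) (n : ℕ) (x : ℝ) :
    HasDerivAt (fun t => ((t - a) / h) ^ n) (n / h * ((x - a) / h) ^ (n - 1)) x := by
  refine ((((hasDerivAt_id x).sub_const a).div_const h).fun_pow n).congr_deriv ?_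
  simp only [id_eq]
  ring

section

variable (c : ℝ × ℝ) (h : ℝ) (a b : ℕ) (z : ℝ × ℝ)

theorem pdx_smon : pdx (smon c h (a, b)) z = a / h * smon c h (a - 1, b) z := by
  rw [show smon c h (a, b) = fun p => ((p.1 - c.1) / h) ^ a * ((p.2 - c.2) / h) ^ b from rfl,
    pdx_mul_fst_snd (hasDerivAt_div_pow c.1 h a z.1) (hasDerivAt_div_pow c.2 h b z.2),
    smon, mul_assoc]

theorem pdy_smon : pdy (smon c h (a, b)) z = b / h * smon c h (a, b - 1) z := by
  rw [show smon c h (a, b) = fun p => ((p.1 - c.1) / h) ^ a * ((p.2 - c.2) / h) ^ b from rfl,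
    pdy_mul_fst_snd (hasDerivAt_div_pow c.1 h a z.1) (hasDerivAt_div_pow c.2 h b z.2),
    smon, mul_left_comm]

theorem smon_succ_fst : smon c h (a + 1, b) z = (z.1 - c.1) / h * smon c h (a, b) z := by
  simp only [smon, pow_succ]
  ring

-- The factor `b` absorbs the truncated subtraction `b - 1 = 0` at `b = 0`.
theorem natCast_mul_mul_smon_pred_snd :
    (b : ℝ) * ((z.2 - c.2) / h * smon c h (a, b - 1) z) = b * smon c h (a, b) z := by
  cases b with
  | zero => simp
  | succ n =>
    simp only [smon, Nat.add_sub_cancel, pow_succ]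
    ring

end

/-- Decomposition of the vector scaled monomial `(m_β, 0)` into a gradient part and a
perpendicular part: `(m_β, 0) = (h/(|β|+1))·∇m_{(βx+1,βy)} + (βy/(|β|+1))·x⊥·m_{(βx,βy−1)}`,
with `x⊥(x,y) = ((y−c₂)/h, −(x−c₁)/h)`; the second term vanishes when `βy = 0` since its
coefficient `βy/(|β|+1)` is zero. -/
theorem vector_monomial_decomposition_x (c : ℝ × ℝ) (h : ℝ) (hh : 0 < h) (βx βy : ℕ) :
    ∀ z : ℝ × ℝ,
      (smon c h (βx, βy) z, (0 : ℝ))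
        = ((h / ((βx : ℝ) + (βy : ℝ) + 1)) * pdx (smon c h (βx + 1, βy)) z
             + ((βy : ℝ) / ((βx : ℝ) + (βy : ℝ) + 1))
                 * (((z.2 - c.2) / h) * smon c h (βx, βy - 1) z),
           (h / ((βx : ℝ) + (βy : ℝ) + 1)) * pdy (smon c h (βx + 1, βy)) z
             + ((βy : ℝ) / ((βx : ℝ) + (βy : ℝ) + 1))
                 * ((-(z.1 - c.1) / h) * smon c h (βx, βy - 1) z)) := by
  intro z
  have hd : (βx : ℝ) + βy + 1 ≠ 0 := by positivity
  rw [pdx_smon, pdy_smon, Nat.add_sub_cancel, smon_succ_fst, Prod.mk.injEq]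
  constructor
  · rw [div_mul_eq_mul_div (βy : ℝ), natCast_mul_mul_smon_pred_snd]
    field_simp
    push_cast
    ring
  · field_simp
    ring
end
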